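/- Pointwise pseudoconvexity estimate for the zeroth-order term. Let K ⊂ ℝ^n be compact, let ψ be of class C^2 on an open neighborhood of K, and assume δ := min over K of |∇ψ| > 0. Then there exist C > 0 and γ* ≥ 1 (depending on g, ψ, K, δ) such that for all γ ≥ γ* and all x ∈ K, writing φ̃ := e^{γψ} and ∇_g φ̃ = (g^{ij}∂_j φ̃)_i, one has 2 ∇²_g φ̃(∇_g φ̃, ∇_g φ̃) − (Δ_g φ̃) |∇_g φ̃|_g^2 ≥ C γ^4 φ̃^3, where |∇_g φ̃|_g^2 = g^{ij} ∂_i φ̃ ∂_j φ̃. -/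

import Mathlib

open MeasureTheory Set
open scoped Topology RealInnerProductSpace

noncomputable section

/-- Euclidean space `ℝ^n`. -/
abbrev Eucl (n : ℕ) : Type := EuclideanSpace ℝ (Fin n)

variable {n : ℕ}

/-- `i`-th partial derivative `∂_i u`. -/
def pd (u : Eucl n → ℝ) (i : Fin n) (x : Eucl n) : ℝ :=
  fderiv ℝ u x (EuclideanSpace.single i 1)

/-- Laplace–Beltrami operator
`Δ_g u = |g|^{-1/2} ∂_i (|g|^{1/2} g^{ij} ∂_j u)` (with `(g^{ij}) = (g_{ij})⁻¹`). -/
def LapBel (g : Eucl n → Matrix (Fin n) (Fin n) ℝ) (u : Eucl n → ℝ) (x : Eucl n) : ℝ :=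
  (Real.sqrt (g x).det)⁻¹ *
    ∑ i, pd (fun y => Real.sqrt (g y).det * ∑ j, (g y)⁻¹ i j * pd u j y) i x

/-- `⟨∇_g w, ∇_g z⟩_g = g^{ij} ∂_i w ∂_j z`. -/
def gInnerGrad (g : Eucl n → Matrix (Fin n) (Fin n) ℝ) (w z : Eucl n → ℝ) (x : Eucl n) : ℝ :=
  ∑ i, ∑ j, (g x)⁻¹ i j * pd w i x * pd z j x

/-- Uniform ellipticity: `g_{ij}(x) ξ^i ξ^j ≥ θ |ξ|²` for all `x, ξ`. -/
def UniformlyElliptic (g : Eucl n → Matrix (Fin n) (Fin n) ℝ) (θ : ℝ) : Prop :=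
  ∀ (x : Eucl n) (ξ : Fin n → ℝ), θ * ∑ i, (ξ i) ^ 2 ≤ ∑ i, ∑ j, g x i j * ξ i * ξ j

/-- Symmetric matrix-valued metric with `C³` entries having bounded derivatives up to order 3. -/
def MetricC3Bounded (g : Eucl n → Matrix (Fin n) (Fin n) ℝ) : Prop :=
  (∀ x, (g x).IsSymm) ∧ (∀ i j, ContDiff ℝ 3 fun x => g x i j) ∧
    ∃ M : ℝ, ∀ (i j : Fin n) (k : ℕ), k ≤ 3 → ∀ x,
      ‖iteratedFDeriv ℝ k (fun y => g y i j) x‖ ≤ M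

/-- Symmetric matrix-valued metric with `C¹` entries. -/
def MetricC1 (g : Eucl n → Matrix (Fin n) (Fin n) ℝ) : Prop :=
  (∀ x, (g x).IsSymm) ∧ ∀ i j, ContDiff ℝ 1 fun x => g x i j

/-- A bounded open set has `C⁴` boundary: near each boundary point there is a `C⁴` defining
function `ρ` with nonvanishing gradient, `D = {ρ < 0}` and `∂D = {ρ = 0}` locally. -/
def HasC4Boundary (D : Set (Eucl n)) : Prop :=
  ∀ x ∈ frontier D, ∃ (V : Set (Eucl n)) (ρ : Eucl n → ℝ),
    IsOpen V ∧ x ∈ V ∧ ContDiffOn ℝ 4 ρ V ∧ (∀ y ∈ V, gradient ρ y ≠ 0) ∧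
    D ∩ V = {y | y ∈ V ∧ ρ y < 0} ∧ frontier D ∩ V = {y | y ∈ V ∧ ρ y = 0}

/-- `ν` is the outward unit normal field of `D` on `∂D`: `ν = ∇ρ/|∇ρ|` for local `C⁴`
defining functions `ρ`. -/
def IsOutwardNormalField (D : Set (Eucl n)) (ν : Eucl n → Eucl n) : Prop :=
  ∀ x ∈ frontier D, ∃ (V : Set (Eucl n)) (ρ : Eucl n → ℝ),
    IsOpen V ∧ x ∈ V ∧ ContDiffOn ℝ 4 ρ V ∧ (∀ y ∈ V, gradient ρ y ≠ 0) ∧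
    D ∩ V = {y | y ∈ V ∧ ρ y < 0} ∧ frontier D ∩ V = {y | y ∈ V ∧ ρ y = 0} ∧
    ν x = ‖gradient ρ x‖⁻¹ • gradient ρ x

/-- Normal derivative `∂_ν w = ∇w · ν`. -/
def normalDeriv (ν : Eucl n → Eucl n) (w : Eucl n → ℝ) (x : Eucl n) : ℝ :=
  ⟪gradient w x, ν x⟫

/-- Tangential gradient `∇_τ w = ∇w − (∂_ν w) ν`. -/
def tangGrad (ν : Eucl n → Eucl n) (w : Eucl n → ℝ) (x : Eucl n) : Eucl n :=
  gradient w x - (normalDeriv ν w x) • ν x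

/-- `g`-normal derivative `∂_{ν_g} w = g^{ij} ν_i ∂_j w / √(g^{kℓ} ν_k ν_ℓ)`. -/
def gNormalDeriv (g : Eucl n → Matrix (Fin n) (Fin n) ℝ) (ν : Eucl n → Eucl n)
    (w : Eucl n → ℝ) (x : Eucl n) : ℝ :=
  (∑ i, ∑ j, (g x)⁻¹ i j * ν x i * pd w j x) /
    Real.sqrt (∑ k, ∑ l, (g x)⁻¹ k l * ν x k * ν x l)

/-- Christoffel symbols `Γ^k_{ij} = (1/2) g^{kℓ}(∂_i g_{jℓ} + ∂_j g_{iℓ} − ∂_ℓ g_{ij})`. -/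
def christoffel (g : Eucl n → Matrix (Fin n) (Fin n) ℝ) (k i j : Fin n) (x : Eucl n) : ℝ :=
  (1 / 2) * ∑ l, (g x)⁻¹ k l *
    (pd (fun y => g y j l) i x + pd (fun y => g y i l) j x - pd (fun y => g y i j) l x)

/-- Covariant Hessian `∇²_g w(X,X) = (∂_i∂_j w − Γ^k_{ij} ∂_k w) X^i X^j`. -/
def covHess (g : Eucl n → Matrix (Fin n) (Fin n) ℝ) (w : Eucl n → ℝ) (x : Eucl n)
    (X : Fin n → ℝ) : ℝ :=
  ∑ i, ∑ j, (pd (pd w j) i x - ∑ k, christoffel g k i j x * pd w k x) * X i * X j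

/-- The vector `∇_g w = (g^{ij} ∂_j w)_i`. -/
def gGrad (g : Eucl n → Matrix (Fin n) (Fin n) ℝ) (w : Eucl n → ℝ) (x : Eucl n) :
    Fin n → ℝ :=
  fun i => ∑ j, (g x)⁻¹ i j * pd w j x

/-! For `φ = F ∘ ψ` the chain rule gives
`2 ∇²_g φ(∇_g φ, ∇_g φ) − (Δ_g φ) |∇_g φ|_g² = F'² (F'' |∇_g ψ|_g⁴ + F' · R)`, where `R` is the
same expression for `ψ` itself. For `F = e^{γ t}` this is `γ³ φ³ (γ |∇_g ψ|_g⁴ + R)`. On the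
compact set `K`, `R` is bounded (`g` is `C¹` and `ψ` is `C²`), while `|∇_g ψ|_g²` has a positive
minimum because `g⁻¹` is positive definite and `∇ψ` does not vanish; so the `γ⁴` term wins. -/

section MatrixCalculus

variable {E ι : Type*} [NormedAddCommGroup E] [NormedSpace ℝ E] [Fintype ι] [DecidableEq ι]
  {k : WithTop ℕ∞} {M : E → Matrix ι ι ℝ}

theorem contDiff_det (hM : ∀ i j, ContDiff ℝ k fun x => M x i j) :
    ContDiff ℝ k fun x => (M x).det := by
  simp only [Matrix.det_apply, Units.smul_def]
  exact ContDiff.sum fun σ _ => (contDiff_prod fun i _ => hM (σ i) i).const_smul _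

theorem contDiff_inv_apply (hM : ∀ i j, ContDiff ℝ k fun x => M x i j)
    (hdet : ∀ x, (M x).det ≠ 0) (i j : ι) : ContDiff ℝ k fun x => (M x)⁻¹ i j := by
  have hadj : ContDiff ℝ k fun x => (M x).adjugate i j := by
    simp only [Matrix.adjugate_apply]
    refine contDiff_det fun a b => ?_
    by_cases hab : a = j
    · subst hab; simpa only [Matrix.updateRow_self] using contDiff_const
    · simpa only [Matrix.updateRow_ne hab] using hM a b
  simp only [Matrix.inv_def, Matrix.smul_apply, Ring.inverse_eq_inv', smul_eq_mul]
  exact ((contDiff_det hM).inv hdet).mul hadj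

end MatrixCalculus

theorem UniformlyElliptic.posDef {g : Eucl n → Matrix (Fin n) (Fin n) ℝ} {θ : ℝ}
    (hg : UniformlyElliptic g θ) (hθ : 0 < θ) {x : Eucl n} (hsymm : (g x).IsSymm) :
    (g x).PosDef := by
  refine Matrix.PosDef.of_dotProduct_mulVec_pos hsymm ?_
  intro ξ hξ
  have hquad : dotProduct (star ξ) ((g x).mulVec ξ) = ∑ i, ∑ j, g x i j * ξ i * ξ j := by
    simp only [dotProduct, Matrix.mulVec, star_trivial, Finset.mul_sum]
    exact Finset.sum_congr rfl fun i _ => Finset.sum_congr rfl fun j _ => by ring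
  have hnorm : 0 < ∑ i, ξ i ^ 2 := by
    obtain ⟨i, hi⟩ := Function.ne_iff.mp hξ
    exact Finset.sum_pos' (fun j _ => sq_nonneg _)
      ⟨i, Finset.mem_univ i, pow_two_pos_of_ne_zero hi⟩
  rw [hquad]
  exact (mul_pos hθ hnorm).trans_le (hg x ξ)

section PartialDerivatives

variable {u v : Eucl n → ℝ} {x : Eucl n}

theorem gradient_apply_eq_pd (u : Eucl n → ℝ) (x : Eucl n) (i : Fin n) :
    gradient u x i = pd u i x := by
  have h : ⟪gradient u x, EuclideanSpace.single i 1⟫ = pd u i x := by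
    rw [gradient, InnerProductSpace.toDual_symm_apply, pd]
  rw [← h, real_inner_comm, EuclideanSpace.inner_single_left]
  simp

theorem Filter.EventuallyEq.pd_eq (h : u =ᶠ[𝓝 x] v) (i : Fin n) : pd u i x = pd v i x := by
  rw [pd, pd, h.fderiv_eq]

theorem pd_mul (hu : DifferentiableAt ℝ u x) (hv : DifferentiableAt ℝ v x) (i : Fin n) :
    pd (fun y => u y * v y) i x = pd u i x * v x + u x * pd v i x := by
  rw [pd, fderiv_fun_mul hu hv]
  simp only [add_apply, smul_apply, smul_eq_mul, pd]
  ring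

theorem pd_comp {F : ℝ → ℝ} (hF : DifferentiableAt ℝ F (u x))
    (hu : DifferentiableAt ℝ u x) (i : Fin n) :
    pd (fun y => F (u y)) i x = deriv F (u x) * pd u i x := by
  rw [pd, show (fun y => F (u y)) = F ∘ u from rfl, fderiv_comp x hF hu]
  simp [pd, mul_comm]

theorem contDiffAt_pd {k m : WithTop ℕ∞} (hu : ContDiffAt ℝ m u x) (hkm : k + 1 ≤ m)
    (i : Fin n) : ContDiffAt ℝ k (pd u i) x :=
  (hu.fderiv_right hkm).clm_apply contDiffAt_const

theorem contDiffOn_pd {k m : WithTop ℕ∞} {O : Set (Eucl n)} (hu : ContDiffOn ℝ m u O)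
    (hO : IsOpen O) (hkm : k + 1 ≤ m) (i : Fin n) : ContDiffOn ℝ k (pd u i) O :=
  (hu.fderiv_of_isOpen hO hkm).clm_apply contDiffOn_const

theorem continuous_pd (hu : ContDiff ℝ 1 u) (i : Fin n) : Continuous (pd u i) :=
  (hu.continuous_fderiv one_ne_zero).clm_apply continuous_const

theorem pd_pd_comp {F : ℝ → ℝ} (hF : ContDiff ℝ 2 F) (hu : ContDiffAt ℝ 2 u x)
    (i j : Fin n) :
    pd (pd (fun y => F (u y)) j) i x
      = deriv (deriv F) (u x) * pd u i x * pd u j x + deriv F (u x) * pd (pd u j) i x := by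
  have hF' : ContDiff ℝ 1 (deriv F) := (contDiff_succ_iff_deriv.mp hF).2.2
  have hfirst : pd (fun y => F (u y)) j =ᶠ[𝓝 x] fun y => deriv F (u y) * pd u j y := by
    filter_upwards [hu.eventually (by simp)] with y hy
    exact pd_comp (hF.differentiable two_ne_zero _) (hy.differentiableAt two_ne_zero) j
  have hu' : DifferentiableAt ℝ u x := hu.differentiableAt two_ne_zero
  have hF'u : DifferentiableAt ℝ (fun y => deriv F (u y)) x :=
    (hF'.differentiable one_ne_zero _).comp x hu'
  have hpdu : DifferentiableAt ℝ (pd u j) x :=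
    (contDiffAt_pd hu (by norm_num) j).differentiableAt one_ne_zero
  rw [hfirst.pd_eq, pd_mul hF'u hpdu, pd_comp (hF'.differentiable one_ne_zero _) hu']

end PartialDerivatives

section Reparametrization

variable {g : Eucl n → Matrix (Fin n) (Fin n) ℝ} {u : Eucl n → ℝ} {x : Eucl n}
  {F : ℝ → ℝ}

theorem covHess_smul (g : Eucl n → Matrix (Fin n) (Fin n) ℝ) (w : Eucl n → ℝ) (x : Eucl n)
    (c : ℝ) (X : Fin n → ℝ) : covHess g w x (c • X) = c ^ 2 * covHess g w x X := by
  simp only [covHess, Pi.smul_apply, smul_eq_mul, Finset.mul_sum]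
  exact Finset.sum_congr rfl fun i _ => Finset.sum_congr rfl fun j _ => by ring

theorem sum_pd_mul_gGrad (g : Eucl n → Matrix (Fin n) (Fin n) ℝ) (u : Eucl n → ℝ)
    (x : Eucl n) : ∑ i, pd u i x * gGrad g u x i = gInnerGrad g u u x := by
  simp only [gGrad, gInnerGrad, Finset.mul_sum]
  exact Finset.sum_congr rfl fun i _ => Finset.sum_congr rfl fun j _ => by ring

theorem gGrad_comp (hF : DifferentiableAt ℝ F (u x)) (hu : DifferentiableAt ℝ u x) :
    gGrad g (fun y => F (u y)) x = deriv F (u x) • gGrad g u x := by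
  funext i
  simp only [gGrad, pd_comp hF hu, Pi.smul_apply, smul_eq_mul, Finset.mul_sum]
  exact Finset.sum_congr rfl fun j _ => by ring

theorem gInnerGrad_comp (hF : DifferentiableAt ℝ F (u x)) (hu : DifferentiableAt ℝ u x) :
    gInnerGrad g (fun y => F (u y)) (fun y => F (u y)) x
      = deriv F (u x) ^ 2 * gInnerGrad g u u x := by
  simp only [gInnerGrad, pd_comp hF hu, Finset.mul_sum]
  exact Finset.sum_congr rfl fun i _ => Finset.sum_congr rfl fun j _ => by ring

theorem covHess_comp (hF : ContDiff ℝ 2 F) (hu : ContDiffAt ℝ 2 u x) (X : Fin n → ℝ) :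
    covHess g (fun y => F (u y)) x X
      = deriv (deriv F) (u x) * (∑ i, pd u i x * X i) ^ 2 + deriv F (u x) * covHess g u x X := by
  have hu' : DifferentiableAt ℝ u x := hu.differentiableAt two_ne_zero
  have hchr : ∀ i j, ∑ k, christoffel g k i j x * pd (fun y => F (u y)) k x
      = deriv F (u x) * ∑ k, christoffel g k i j x * pd u k x := fun i j => by
    simp only [pd_comp (hF.differentiable two_ne_zero _) hu', Finset.mul_sum]
    exact Finset.sum_congr rfl fun k _ => by ring
  rw [covHess, covHess, sq, Finset.sum_mul_sum, Finset.mul_sum, Finset.mul_sum,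
    ← Finset.sum_add_distrib]
  refine Finset.sum_congr rfl fun i _ => ?_
  rw [Finset.mul_sum, Finset.mul_sum, ← Finset.sum_add_distrib]
  refine Finset.sum_congr rfl fun j _ => ?_
  rw [pd_pd_comp hF hu, hchr]
  ring

def lapBelFlux (g : Eucl n → Matrix (Fin n) (Fin n) ℝ) (u : Eucl n → ℝ) (i : Fin n)
    (y : Eucl n) : ℝ :=
  Real.sqrt (g y).det * gGrad g u y i

theorem lapBel_eq_sum_pd_lapBelFlux (g : Eucl n → Matrix (Fin n) (Fin n) ℝ) (u : Eucl n → ℝ)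
    (x : Eucl n) : LapBel g u x = (Real.sqrt (g x).det)⁻¹ * ∑ i, pd (lapBelFlux g u i) i x :=
  rfl

theorem lapBel_comp (hF : ContDiff ℝ 2 F) (hu : ContDiffAt ℝ 2 u x)
    (hflux : ∀ i, DifferentiableAt ℝ (lapBelFlux g u i) x) (hdet : 0 < (g x).det) :
    LapBel g (fun y => F (u y)) x
      = deriv (deriv F) (u x) * gInnerGrad g u u x + deriv F (u x) * LapBel g u x := by
  have hF' : ContDiff ℝ 1 (deriv F) := (contDiff_succ_iff_deriv.mp hF).2.2
  have hu' : DifferentiableAt ℝ u x := hu.differentiableAt two_ne_zero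
  have hpd : ∀ i, pd (lapBelFlux g (fun y => F (u y)) i) i x
      = deriv (deriv F) (u x) * pd u i x * lapBelFlux g u i x
        + deriv F (u x) * pd (lapBelFlux g u i) i x := fun i => by
    have hflux_comp : lapBelFlux g (fun y => F (u y)) i
        =ᶠ[𝓝 x] fun y => deriv F (u y) * lapBelFlux g u i y := by
      filter_upwards [hu.eventually (by simp)] with y hy
      simp only [lapBelFlux, gGrad_comp (hF.differentiable two_ne_zero _)
        (hy.differentiableAt two_ne_zero), Pi.smul_apply, smul_eq_mul]
      ring
    have hF'u : DifferentiableAt ℝ (fun y => deriv F (u y)) x :=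
      (hF'.differentiable one_ne_zero _).comp x hu'
    rw [hflux_comp.pd_eq, pd_mul hF'u (hflux i), pd_comp (hF'.differentiable one_ne_zero _) hu']
  have hsqrt : Real.sqrt (g x).det ≠ 0 := (Real.sqrt_pos.mpr hdet).ne'
  rw [lapBel_eq_sum_pd_lapBelFlux, lapBel_eq_sum_pd_lapBelFlux, ← sum_pd_mul_gGrad]
  simp only [hpd, lapBelFlux, Finset.sum_add_distrib, Finset.mul_sum, mul_add]
  congr 1 <;> refine Finset.sum_congr rfl fun i _ => ?_ <;> field_simp

def zerothOrderTerm (g : Eucl n → Matrix (Fin n) (Fin n) ℝ) (w : Eucl n → ℝ) (x : Eucl n) :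
    ℝ :=
  2 * covHess g w x (gGrad g w x) - LapBel g w x * gInnerGrad g w w x

theorem zerothOrderTerm_comp (hF : ContDiff ℝ 2 F) (hu : ContDiffAt ℝ 2 u x)
    (hflux : ∀ i, DifferentiableAt ℝ (lapBelFlux g u i) x) (hdet : 0 < (g x).det) :
    zerothOrderTerm g (fun y => F (u y)) x
      = deriv F (u x) ^ 2 * (deriv (deriv F) (u x) * gInnerGrad g u u x ^ 2
          + deriv F (u x) * zerothOrderTerm g u x) := by
  have hu' : DifferentiableAt ℝ u x := hu.differentiableAt two_ne_zero
  have hFu : DifferentiableAt ℝ F (u x) := hF.differentiable two_ne_zero _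
  rw [zerothOrderTerm, zerothOrderTerm, gGrad_comp hFu hu', covHess_smul, covHess_comp hF hu,
    sum_pd_mul_gGrad, lapBel_comp hF hu hflux hdet, gInnerGrad_comp hFu hu']
  ring

theorem zerothOrderTerm_exp_mul (γ : ℝ) (hu : ContDiffAt ℝ 2 u x)
    (hflux : ∀ i, DifferentiableAt ℝ (lapBelFlux g u i) x) (hdet : 0 < (g x).det) :
    zerothOrderTerm g (fun y => Real.exp (γ * u y)) x
      = γ ^ 3 * Real.exp (γ * u x) ^ 3
          * (γ * gInnerGrad g u u x ^ 2 + zerothOrderTerm g u x) := by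
  have hderiv := iteratedDeriv_exp_const_mul 1 γ
  have hderiv2 := iteratedDeriv_exp_const_mul 2 γ
  rw [iteratedDeriv_one] at hderiv
  rw [iteratedDeriv_succ, iteratedDeriv_one] at hderiv2
  rw [zerothOrderTerm_comp (F := fun s => Real.exp (γ * s)) (by fun_prop) hu hflux hdet, hderiv2,
    hderiv]
  ring

theorem le_zerothOrderTerm_exp_mul {γ q B : ℝ} (hu : ContDiffAt ℝ 2 u x)
    (hflux : ∀ i, DifferentiableAt ℝ (lapBelFlux g u i) x) (hdet : 0 < (g x).det) (hγ : 0 < γ)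
    (hq : 0 ≤ q) (hqx : q ≤ gInnerGrad g u u x) (hBx : -B ≤ zerothOrderTerm g u x)
    (hγB : 2 * B ≤ γ * q ^ 2) :
    q ^ 2 / 2 * γ ^ 4 * Real.exp (γ * u x) ^ 3
      ≤ zerothOrderTerm g (fun y => Real.exp (γ * u y)) x := by
  rw [zerothOrderTerm_exp_mul γ hu hflux hdet]
  have hqQ : γ * q ^ 2 ≤ γ * gInnerGrad g u u x ^ 2 := by gcongr
  calc q ^ 2 / 2 * γ ^ 4 * Real.exp (γ * u x) ^ 3
      = γ ^ 3 * Real.exp (γ * u x) ^ 3 * (γ * q ^ 2 - γ * q ^ 2 / 2) := by ring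
    _ ≤ γ ^ 3 * Real.exp (γ * u x) ^ 3
          * (γ * gInnerGrad g u u x ^ 2 + zerothOrderTerm g u x) := by
      gcongr
      linarith

end Reparametrization

section Continuity

variable {g : Eucl n → Matrix (Fin n) (Fin n) ℝ} {u : Eucl n → ℝ} {O : Set (Eucl n)}

theorem gInnerGrad_self_pos {x : Eucl n} (hg : (g x).PosDef) (hu : gradient u x ≠ 0) :
    0 < gInnerGrad g u u x := by
  have hξ : (fun i => pd u i x) ≠ 0 := fun h =>
    hu (PiLp.ext fun i => by rw [gradient_apply_eq_pd]; exact congrFun h i)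
  have hquad : dotProduct (star fun i => pd u i x) ((g x)⁻¹.mulVec fun i => pd u i x)
      = gInnerGrad g u u x := by
    simp only [dotProduct, Matrix.mulVec, star_trivial, gInnerGrad, Finset.mul_sum]
    exact Finset.sum_congr rfl fun i _ => Finset.sum_congr rfl fun j _ => by ring
  exact hquad ▸ hg.inv.dotProduct_mulVec_pos hξ

theorem continuous_christoffel (hg : ∀ i j, ContDiff ℝ 1 fun x => g x i j)
    (hginv : ∀ i j, Continuous fun x => (g x)⁻¹ i j) (k i j : Fin n) :
    Continuous (christoffel g k i j) :=
  continuous_const.mul (continuous_finsetSum _ fun l _ => (hginv k l).mul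
    (((continuous_pd (hg j l) i).add (continuous_pd (hg i l) j)).sub (continuous_pd (hg i j) l)))

theorem continuousOn_gInnerGrad (hginv : ∀ i j, Continuous fun x => (g x)⁻¹ i j)
    (hu : ContDiffOn ℝ 1 u O) (hO : IsOpen O) : ContinuousOn (gInnerGrad g u u) O := by
  have hpd : ∀ i, ContinuousOn (pd u i) O := fun i =>
    (contDiffOn_pd (k := 0) hu hO (by norm_num) i).continuousOn
  exact continuousOn_finsetSum _ fun i _ => continuousOn_finsetSum _ fun j _ =>
    ((hginv i j).continuousOn.mul (hpd i)).mul (hpd j)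

theorem continuousOn_covHess_gGrad (hg : ∀ i j, ContDiff ℝ 1 fun x => g x i j)
    (hginv : ∀ i j, Continuous fun x => (g x)⁻¹ i j) (hu : ContDiffOn ℝ 2 u O)
    (hO : IsOpen O) :
    ContinuousOn (fun x => covHess g u x (gGrad g u x)) O := by
  have hpd : ∀ i, ContinuousOn (pd u i) O := fun i =>
    (contDiffOn_pd (k := 0) hu hO (by norm_num) i).continuousOn
  have hpd2 : ∀ i j, ContinuousOn (pd (pd u j) i) O := fun i j =>
    (contDiffOn_pd (k := 0) (contDiffOn_pd (k := 1) hu hO (by norm_num) j) hO (by norm_num)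
      i).continuousOn
  have hgGrad : ∀ i, ContinuousOn (fun x => gGrad g u x i) O := fun i =>
    continuousOn_finsetSum _ fun j _ => (hginv i j).continuousOn.mul (hpd j)
  exact continuousOn_finsetSum _ fun i _ => continuousOn_finsetSum _ fun j _ =>
    (((hpd2 i j).sub (continuousOn_finsetSum _ fun k _ =>
      (continuous_christoffel hg hginv k i j).continuousOn.mul (hpd k))).mul (hgGrad i)).mul
      (hgGrad j)

theorem contDiffOn_lapBelFlux (hg : ∀ i j, ContDiff ℝ 1 fun x => g x i j)
    (hdet : ∀ x, 0 < (g x).det) (hu : ContDiffOn ℝ 2 u O) (hO : IsOpen O) (i : Fin n) :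
    ContDiffOn ℝ 1 (lapBelFlux g u i) O :=
  ((contDiff_det hg).sqrt fun x => (hdet x).ne').contDiffOn.mul <| ContDiffOn.sum fun j _ =>
    (contDiff_inv_apply hg (fun x => (hdet x).ne') i j).contDiffOn.mul
      (contDiffOn_pd hu hO (by norm_num) j)

theorem continuousOn_lapBel (hg : ∀ i j, ContDiff ℝ 1 fun x => g x i j)
    (hdet : ∀ x, 0 < (g x).det) (hu : ContDiffOn ℝ 2 u O) (hO : IsOpen O) :
    ContinuousOn (LapBel g u) O := by
  have hsqrt : Continuous fun x => (Real.sqrt (g x).det)⁻¹ :=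
    ((contDiff_det hg).continuous.sqrt).inv₀ fun x => (Real.sqrt_pos.mpr (hdet x)).ne'
  exact hsqrt.continuousOn.mul <| continuousOn_finsetSum _ fun i _ =>
    (contDiffOn_pd (k := 0) (contDiffOn_lapBelFlux hg hdet hu hO i) hO (by norm_num)
      i).continuousOn

theorem continuousOn_zerothOrderTerm (hg : ∀ i j, ContDiff ℝ 1 fun x => g x i j)
    (hdet : ∀ x, 0 < (g x).det) (hu : ContDiffOn ℝ 2 u O) (hO : IsOpen O) :
    ContinuousOn (zerothOrderTerm g u) O := by
  have hginv : ∀ i j, Continuous fun x => (g x)⁻¹ i j := fun i j =>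
    (contDiff_inv_apply hg (fun x => (hdet x).ne') i j).continuous
  exact (continuousOn_const.mul (continuousOn_covHess_gGrad hg hginv hu hO)).sub
    ((continuousOn_lapBel hg hdet hu hO).mul
      (continuousOn_gInnerGrad hginv (hu.of_le one_le_two) hO))

end Continuity

theorem pseudoconvexity_zeroth_order_term_general
    (n : ℕ)
    (g : Eucl n → Matrix (Fin n) (Fin n) ℝ) (hg : MetricC1 g)
    (θ : ℝ) (hθ : 0 < θ) (hgθ : UniformlyElliptic g θ)
    (K : Set (Eucl n)) (hK : IsCompact K)
    (O : Set (Eucl n)) (hO : IsOpen O) (hKO : K ⊆ O)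
    (ψ : Eucl n → ℝ) (hψ : ContDiffOn ℝ 2 ψ O)
    (δ : ℝ) (hδ : 0 < δ) (hψδ : ∀ x ∈ K, δ ≤ ‖gradient ψ x‖) :
    ∃ C > (0 : ℝ), ∃ γstar ≥ (1 : ℝ), ∀ γ ≥ γstar, ∀ x ∈ K,
      C * γ ^ 4 * (Real.exp (γ * ψ x)) ^ 3 ≤
        2 * covHess g (fun y => Real.exp (γ * ψ y)) x
              (gGrad g (fun y => Real.exp (γ * ψ y)) x) -
          LapBel g (fun y => Real.exp (γ * ψ y)) x *
            gInnerGrad g (fun y => Real.exp (γ * ψ y))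
              (fun y => Real.exp (γ * ψ y)) x := by
  obtain ⟨hsymm, hgC1⟩ := hg
  have hpos : ∀ x, (g x).PosDef := fun x => hgθ.posDef hθ (hsymm x)
  have hdet : ∀ x, 0 < (g x).det := fun x => (hpos x).det_pos
  rcases K.eq_empty_or_nonempty with rfl | hKne
  · exact ⟨1, one_pos, 1, le_rfl, by simp⟩
  obtain ⟨x₀, hx₀K, hx₀min⟩ := hK.exists_isMinOn hKne <| (continuousOn_gInnerGrad
    (fun i j => (contDiff_inv_apply hgC1 (fun x => (hdet x).ne') i j).continuous)
    (hψ.of_le one_le_two) hO).mono hKO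
  set q := gInnerGrad g ψ ψ x₀
  have hq : 0 < q := gInnerGrad_self_pos (hpos x₀) <|
    norm_pos_iff.mp (hδ.trans_le (hψδ x₀ hx₀K))
  obtain ⟨B, hB⟩ := hK.exists_bound_of_continuousOn
    ((continuousOn_zerothOrderTerm hgC1 hdet hψ hO).mono hKO)
  refine ⟨q ^ 2 / 2, by positivity, max 1 (2 * B / q ^ 2), le_max_left _ _,
    fun γ hγ x hx => ?_⟩
  have hxO : O ∈ 𝓝 x := hO.mem_nhds (hKO hx)
  show _ ≤ zerothOrderTerm g (fun y => Real.exp (γ * ψ y)) x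
  exact le_zerothOrderTerm_exp_mul (hψ.contDiffAt hxO)
    (fun i => ((contDiffOn_lapBelFlux hgC1 hdet hψ hO i).contDiffAt hxO).differentiableAt
      one_ne_zero)
    (hdet x) (one_pos.trans_le ((le_max_left _ _).trans hγ)) hq.le (hx₀min hx)
    (neg_le_of_abs_le (hB x hx)) ((div_le_iff₀ (by positivity)).mp ((le_max_right _ _).trans hγ))

/-- **Pointwise pseudoconvexity estimate for the zeroth-order term.**
For `φ̃ = e^{γψ}` and `γ` large:
`2∇²_g φ̃(∇_g φ̃,∇_g φ̃) − (Δ_g φ̃)|∇_g φ̃|_g² ≥ Cγ⁴φ̃³` on `K`. -/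
theorem pseudoconvexity_zeroth_order_term
    (n : ℕ) (hn : 2 ≤ n)
    (g : Eucl n → Matrix (Fin n) (Fin n) ℝ) (hg : MetricC1 g)
    (θ : ℝ) (hθ : 0 < θ) (hgθ : UniformlyElliptic g θ)
    (K : Set (Eucl n)) (hK : IsCompact K)
    (O : Set (Eucl n)) (hO : IsOpen O) (hKO : K ⊆ O)
    (ψ : Eucl n → ℝ) (hψ : ContDiffOn ℝ 2 ψ O)
    (δ : ℝ) (hδ : 0 < δ) (hψδ : ∀ x ∈ K, δ ≤ ‖gradient ψ x‖) :
    ∃ C > (0 : ℝ), ∃ γstar ≥ (1 : ℝ), ∀ γ ≥ γstar, ∀ x ∈ K,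
      C * γ ^ 4 * (Real.exp (γ * ψ x)) ^ 3 ≤
        2 * covHess g (fun y => Real.exp (γ * ψ y)) x
              (gGrad g (fun y => Real.exp (γ * ψ y)) x) -
          LapBel g (fun y => Real.exp (γ * ψ y)) x *
            gInnerGrad g (fun y => Real.exp (γ * ψ y))
              (fun y => Real.exp (γ * ψ y)) x :=
  pseudoconvexity_zeroth_order_term_general n g hg θ hθ hgθ K hK O hO hKO ψ hψ δ hδ hψδ
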